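/- arXiv:1404.7476 — 2 statements merged into one kernel-verified Lean document; each statement's English description precedes it below -/
import Mathlib

section
/- For N = 9, the absolute value of the determinant of the 3×3 matrix with entries 2 sin(2πhn/9), where h ranges over {1,2,4} (the units of ℤ/9 less than 9/2) and n over {1,2,3}, equals 9√3. -/
open Real Matrix

/-- `D₉ = 9√3`: the 3×3 determinant `|det(2 sin(2πhn/9))|` with
`h ∈ {1,2,4}`, `n ∈ {1,2,3}`, equals `9√3`. -/
theorem D9_eq :
    |(Matrix.of fun h n : Fin 3 =>
        2 * Real.sin (2 * π * (![1, 2, 4] h) * (n.1 + 1) / 9)).det| = 9 * Real.sqrt 3 := by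
  rw [Matrix.det_fin_three]
  simp only [Matrix.of_apply, Matrix.cons_val_zero, Matrix.cons_val_one, Matrix.head_cons,
    Matrix.cons_val_two, Matrix.tail_cons, Fin.val_zero, Fin.val_one, Fin.val_two]
  norm_num
  ring_nf
  have h23 : Real.sin (π * (2/3)) = Real.sqrt 3 / 2 := by
    rw [show π * (2/3) = π - π/3 by ring, Real.sin_pi_sub, Real.sin_pi_div_three]
  have h43 : Real.sin (π * (4/3)) = -(Real.sqrt 3 / 2) := by
    rw [show π * (4/3) = 2*π - π*(2/3) by ring, Real.sin_two_pi_sub, h23]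
  have h83 : Real.sin (π * (8/3)) = Real.sqrt 3 / 2 := by
    rw [show π * (8/3) = π*(2/3) + 2*π by ring, Real.sin_add_two_pi, h23]
  have h169 : Real.sin (π * (16/9)) = -Real.sin (π * (2/9)) := by
    rw [show π * (16/9) = 2*π - π*(2/9) by ring, Real.sin_two_pi_sub]
  rw [h23, h43, h83, h169]
  have c23 : Real.cos (π * (2/3)) = -(1/2) := by
    rw [show π * (2/3) = π - π/3 by ring, Real.cos_pi_sub, Real.cos_pi_div_three]
  have c43 : Real.cos (π * (4/3)) = -(1/2) := by
    rw [show π * (4/3) = 2*π - π*(2/3) by ring, Real.cos_two_pi_sub, c23]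
  have c109 : Real.cos (π * (10/9)) = Real.cos (π * (8/9)) := by
    rw [show π * (10/9) = 2*π - π*(8/9) by ring, Real.cos_two_pi_sub]
  have c169 : Real.cos (π * (16/9)) = Real.cos (π * (2/9)) := by
    rw [show π * (16/9) = 2*π - π*(2/9) by ring, Real.cos_two_pi_sub]
  have q1 : Real.cos (π*(8/9)) + 1/2 =
      -2 * (Real.sin (π*(8/9)) * Real.sin (π*(2/9))) := by
    have h := Real.cos_sub_cos (π*(10/9)) (π*(2/3))
    rw [show (π*(10/9)+π*(2/3))/2 = π*(8/9) by ring,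
      show (π*(10/9)-π*(2/3))/2 = π*(2/9) by ring, c109, c23] at h
    linear_combination h
  have q2 : -(1/2) - Real.cos (π*(4/9)) =
      -2 * (Real.sin (π*(8/9)) * Real.sin (π*(4/9))) := by
    have h := Real.cos_sub_cos (π*(4/3)) (π*(4/9))
    rw [show (π*(4/3)+π*(4/9))/2 = π*(8/9) by ring,
      show (π*(4/3)-π*(4/9))/2 = π*(4/9) by ring, c43] at h
    linear_combination h
  have q3 : -(1/2) - Real.cos (π*(2/9)) =
      -2 * (Real.sin (π*(4/9)) * Real.sin (π*(2/9))) := by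
    have h := Real.cos_sub_cos (π*(2/3)) (π*(2/9))
    rw [show (π*(2/3)+π*(2/9))/2 = π*(4/9) by ring,
      show (π*(2/3)-π*(2/9))/2 = π*(2/9) by ring, c23] at h
    linear_combination h
  have q4 : Real.cos (π*(4/9)) - 1 =
      -2 * (Real.sin (π*(2/9)) * Real.sin (π*(2/9))) := by
    have h := Real.cos_sub_cos (π*(4/9)) 0
    rw [show (π*(4/9)+0)/2 = π*(2/9) by ring,
      show (π*(4/9)-0)/2 = π*(2/9) by ring, Real.cos_zero] at h
    linear_combination h
  have q5 : Real.cos (π*(8/9)) - 1 =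
      -2 * (Real.sin (π*(4/9)) * Real.sin (π*(4/9))) := by
    have h := Real.cos_sub_cos (π*(8/9)) 0
    rw [show (π*(8/9)+0)/2 = π*(4/9) by ring,
      show (π*(8/9)-0)/2 = π*(4/9) by ring, Real.cos_zero] at h
    linear_combination h
  have q6 : Real.cos (π*(2/9)) - 1 =
      -2 * (Real.sin (π*(8/9)) * Real.sin (π*(8/9))) := by
    have h := Real.cos_sub_cos (π*(16/9)) 0
    rw [show (π*(16/9)+0)/2 = π*(8/9) by ring,
      show (π*(16/9)-0)/2 = π*(8/9) by ring, Real.cos_zero, c169] at h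
    linear_combination h
  rw [abs_eq (by positivity)]
  right
  linear_combination (2*Real.sqrt 3)*q1 - 2*Real.sqrt 3*(q2+q3+q4+q5+q6)
end

section
/- Let N ≥ 3 and let a, b be nonzero residues mod N with a+b ≠ 0 and gcd(N, a, b) = 1, and let c = -a-b. Suppose N is odd. Then H_N^{a,b} = H_N^{c,b} = H_N^{a,c}, where H_N^{x,y} = {h ∈ (ℤ/N)^× : ⟨hx⟩ + ⟨hy⟩ < N}. -/
theorem H_aux_key (N : ℕ) (hN : 3 ≤ N) (x y : ZMod N) (hx : x ≠ 0) (hy : y ≠ 0)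
    (hxy : x + y ≠ 0) :
    x.val + y.val < N ↔ x.val + y.val + (-x - y).val = N := by
  haveI : NeZero N := ⟨by omega⟩
  have hvx : x.val < N := ZMod.val_lt x
  have hvy : y.val < N := ZMod.val_lt y
  have hx0 : x.val ≠ 0 := fun h => hx (by rwa [ZMod.val_eq_zero] at h)
  have hy0 : y.val ≠ 0 := fun h => hy (by rwa [ZMod.val_eq_zero] at h)
  have hxy0 : (x + y).val ≠ 0 := fun h => hxy (by rwa [ZMod.val_eq_zero] at h)
  have hadd : (x + y).val = (x.val + y.val) % N := ZMod.val_add x y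
  have hneg : (-x - y).val = N - (x + y).val := by
    have : -x - y = -(x + y) := by ring
    rw [this, ZMod.neg_val, if_neg hxy]
  have hlt : (x + y).val < N := ZMod.val_lt _
  rcases lt_or_ge (x.val + y.val) N with hs | hs
  · rw [Nat.mod_eq_of_lt hs] at hadd
    omega
  · have : (x.val + y.val) % N = x.val + y.val - N := by
      rw [Nat.mod_eq_sub_mod hs, Nat.mod_eq_of_lt (by omega)]
    omega

/-- For odd `N ≥ 3` and nonzero `a, b` mod `N` with `a + b ≠ 0`,
`gcd(N, a, b) = 1`, and `c = -a-b`, one has `H_N^{a,b} = H_N^{c,b} = H_N^{a,c}`. -/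
theorem H_symm_odd (N : ℕ) (hN : 3 ≤ N) (hodd : Odd N) (a b : ZMod N)
    (ha : a ≠ 0) (hb : b ≠ 0) (hab : a + b ≠ 0)
    (hgcd : Nat.gcd (Nat.gcd N a.val) b.val = 1) (h : (ZMod N)ˣ) :
    ((((h : ZMod N) * a).val + ((h : ZMod N) * b).val < N ↔
        ((h : ZMod N) * (-a - b)).val + ((h : ZMod N) * b).val < N) ∧
      (((h : ZMod N) * a).val + ((h : ZMod N) * b).val < N ↔
        ((h : ZMod N) * a).val + ((h : ZMod N) * (-a - b)).val < N)) := by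
  haveI : NeZero N := ⟨by omega⟩
  set x := (h : ZMod N) * a with hxdef
  set y := (h : ZMod N) * b with hydef
  have hz : (h : ZMod N) * (-a - b) = -x - y := by rw [hxdef, hydef]; ring
  have hu : ∀ c : ZMod N, c ≠ 0 → (h : ZMod N) * c ≠ 0 := by
    intro c hc hcon
    have := congrArg (fun t => ((h⁻¹ : (ZMod N)ˣ) : ZMod N) * t) hcon
    simp [← mul_assoc] at this
    exact hc this
  have hx : x ≠ 0 := hu a ha
  have hy : y ≠ 0 := hu b hb
  have hxy : x + y ≠ 0 := by
    have := hu (a + b) hab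
    rwa [mul_add] at this
  have hz0 : -x - y ≠ 0 := by
    intro hcon
    apply hxy
    have : x + y = -(-x - y) := by ring
    rw [this, hcon, neg_zero]
  rw [hz]
  constructor
  · rw [H_aux_key N hN x y hx hy hxy, H_aux_key N hN (-x - y) y hz0 hy (by
      intro hcon; apply hx; linear_combination -hcon)]
    constructor
    · intro heq
      have : -(-x - y) - y = x := by ring
      rw [this]; omega
    · intro heq
      have : -(-x - y) - y = x := by ring
      rw [this] at heq; omega
  · rw [H_aux_key N hN x y hx hy hxy, H_aux_key N hN x (-x - y) hx hz0 (by
      intro hcon; apply hy; linear_combination -hcon)]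
    constructor
    · intro heq
      have : -x - (-x - y) = y := by ring
      rw [this]; omega
    · intro heq
      have : -x - (-x - y) = y := by ring
      rw [this] at heq; omega
end
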